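/- arXiv:1010.2005 — 2 statements merged into one kernel-verified Lean document; each statement's English description precedes it below -/
import Mathlib

section
/- Let n, p be positive integers with p ≤ n-1, and let (d_m) be a sequence of integers with d_1 = p+1, d_m ≤ n for all m, d_{m+1} ≤ d_m + p + 1 for all m, and such that whenever d_{m+1} ≤ d_m + 1 one has d_{m+1} = n. If l is the least index with d_l = n, then ⌊(n-1)/(p+1)⌋ + 1 ≤ l ≤ ⌊(n-p)/2⌋ + 1. -/
/-- Combinatorial core of Theorem 1.2: bounds on the length `l` of chains of
minimal rational curves, from the growth properties of the dimensions `d m`. -/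
theorem stmt_0 (n p : ℕ) (hn : 0 < n) (hp : 0 < p) (hpn : p ≤ n - 1)
    (d : ℕ → ℕ)
    (hd1 : d 1 = p + 1)
    (hdn : ∀ m, 1 ≤ m → d m ≤ n)
    (hstep : ∀ m, 1 ≤ m → d (m + 1) ≤ d m + p + 1)
    (hjump : ∀ m, 1 ≤ m → d (m + 1) ≤ d m + 1 → d (m + 1) = n)
    (l : ℕ) (hl : 1 ≤ l) (hdl : d l = n) (hleast : ∀ m, 1 ≤ m → m < l → d m ≠ n) :
    (n - 1) / (p + 1) + 1 ≤ l ∧ l ≤ (n - p) / 2 + 1 := by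
  have A : ∀ m, 1 ≤ m → d m ≤ m * (p + 1) := by
    intro m hm
    induction m with
    | zero => omega
    | succ k ih =>
      rcases Nat.lt_or_ge k 1 with hk | hk
      · interval_cases k
        simpa using hd1.le
      · have h1 := hstep k hk
        have h2 := ih hk
        calc d (k + 1) ≤ d k + p + 1 := h1
          _ ≤ k * (p + 1) + (p + 1) := by omega
          _ = (k + 1) * (p + 1) := by ring
  constructor
  · have hAl := A l hl
    rw [hdl] at hAl
    have : (n - 1) / (p + 1) < l := by
      rw [Nat.div_lt_iff_lt_mul (by omega)]
      omega
    omega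
  · rcases Nat.lt_or_ge l 2 with h2 | h2
    · omega
    · have B : ∀ m, 1 ≤ m → m < l → p + 1 + 2 * (m - 1) ≤ d m := by
        intro m hm
        induction m with
        | zero => omega
        | succ k ih =>
          intro hml
          rcases Nat.lt_or_ge k 1 with hk | hk
          · interval_cases k
            simp [hd1]
          · have hne : d (k + 1) ≠ n := hleast (k + 1) (by omega) hml
            have hj := hjump k hk
            have hstep2 : d k + 2 ≤ d (k + 1) := by
              by_contra h
              exact hne (hj (by omega))
            have := ih hk (by omega)
            omega
      have hb := B (l - 1) (by omega) (by omega)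
      have hne := hleast (l - 1) (by omega) (by omega)
      have hle := hdn (l - 1) (by omega)
      have h1 : l - 1 ≤ (n - p) / 2 := by
        rw [Nat.le_div_iff_mul_le (by omega)]
        omega
      omega
end

section
/- For all integers n ≥ 1 and p with 1 ≤ p ≤ n-1, one has ⌊(n-1)/(p+1)⌋ + 1 = ⌊(n-p)/2⌋ + 1 if and only if (n-3 ≤ p ≤ n-1) or (p = 1) or (n,p) = (7,2). -/
/-- Hard direction: for `2 ≤ p`, `p+4 ≤ n`, `(n,p) ≠ (7,2)`, the bounds differ. -/
lemma aux_strict (n p : ℕ) (hp : 2 ≤ p) (hn : p + 4 ≤ n) (hx : ¬(n = 7 ∧ p = 2)) :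
    (n - 1) / (p + 1) < (n - p) / 2 := by
  obtain ⟨e, rfl⟩ : ∃ e, n = p + e + 4 := ⟨n - p - 4, by omega⟩
  obtain ⟨q, hq⟩ : ∃ q, (p + e + 4 - 1) / (p + 1) = q := ⟨_, rfl⟩
  rw [hq]
  have h1 : (p + 1) * q ≤ p + e + 3 := by
    have := Nat.div_mul_le_self (p + e + 4 - 1) (p + 1)
    rw [hq, mul_comm] at this; omega
  have h2 : p + e + 3 < (q + 1) * (p + 1) := by
    have h : (p + e + 4 - 1) / (p + 1) < q + 1 := by omega
    have := (Nat.div_lt_iff_lt_mul (show 0 < p + 1 by omega)).mp h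
    omega
  have key : (q + 1) * 2 ≤ e + 4 := by
    rcases Nat.lt_or_ge q 2 with hq2 | hq2
    · interval_cases q <;> nlinarith
    · rcases Nat.lt_or_ge p 3 with hp3 | hp3
      · have hp2 : p = 2 := by omega
        subst hp2
        rcases Nat.lt_or_ge q 3 with hq3 | hq3
        · have hq' : q = 2 := by omega
          have he : e ≠ 1 := by
            intro h; exact hx ⟨by omega, rfl⟩
          subst hq'; omega
        · omega
      · obtain ⟨p', rfl⟩ : ∃ p', p = p' + 3 := ⟨p - 3, by omega⟩
        obtain ⟨q', rfl⟩ : ∃ q', q = q' + 2 := ⟨q - 2, by omega⟩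
        nlinarith [Nat.zero_le (p' * q')]
  have h3 : q + 1 ≤ (p + e + 4 - p) / 2 := by
    rw [Nat.le_div_iff_mul_le (by norm_num)]
    omega
  omega

/-- Corollary 3.2 (arithmetic content): the lower and upper bounds for the
length coincide iff `n-3 ≤ p ≤ n-1`, `p = 1`, or `(n,p) = (7,2)`. -/
theorem stmt_1 (n p : ℕ) (hn : 1 ≤ n) (hp : 1 ≤ p) (hpn : p ≤ n - 1) :
    (n - 1) / (p + 1) + 1 = (n - p) / 2 + 1 ↔
      (n - 3 ≤ p ∧ p ≤ n - 1) ∨ p = 1 ∨ (n = 7 ∧ p = 2) := by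
  have hn2 : 2 ≤ n := by omega
  constructor
  · intro h
    by_contra hc
    push_neg at hc
    obtain ⟨hA, hB, hC⟩ := hc
    have hx : ¬(n = 7 ∧ p = 2) := by rintro ⟨a, b⟩; exact absurd b (hC a)
    have hlt : p + 4 ≤ n := by
      by_cases hA' : n - 3 ≤ p
      · have := hA hA'; omega
      · omega
    have := aux_strict n p (by omega) hlt hx
    omega
  · rintro (⟨h1, h2⟩ | h1 | ⟨h7, h2⟩)
    · have : n = p + 1 ∨ n = p + 2 ∨ n = p + 3 := by omega
      rcases this with h | h | h <;> subst h
      · rw [Nat.div_eq_of_lt (by omega), Nat.div_eq_of_lt (by omega)]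
      · rw [show p + 2 - 1 = p + 1 from by omega, show p + 2 - p = 2 from by omega,
          Nat.div_self (by omega), Nat.div_self (by omega)]
      · rw [show p + 3 - 1 = p + 2 from by omega, show p + 3 - p = 3 from by omega]
        have hd : (p + 2) / (p + 1) = 1 := Nat.div_eq_of_lt_le (by omega) (by omega)
        rw [hd]
    · subst h1; norm_num
    · subst h7; subst h2; norm_num
end
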